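/- Let G be a group and let ρ0, ρ1, ρ2 ∈ G satisfy ρ0^2 = ρ1^2 = ρ2^2 = 1 and ρ0ρ2 = ρ2ρ0. Then [(ρ0ρ1)^2, ρ2] = (ρ2ρ1)⁻¹ [ρ0, (ρ1ρ2)^2] (ρ2ρ1), where [x, y] denotes the commutator x⁻¹y⁻¹xy. -/

import Mathlib

/-!
Both sides equal `(ρ1 ρ0 ρ1 ρ2)²`. Replacing each inverse of an involution by the involution
itself (and the conjugator `ρ2ρ1` by `(ρ1ρ2)⁻¹`), each side reduces to that word via
`ρ0ρ2ρ0 = ρ2`, resp. `ρ2ρ0ρ2 = ρ0`, which hold because `ρ0` and `ρ2` are commuting involutions.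
-/

/-- The commutator `[x, y] = x⁻¹ y⁻¹ x y` as used in the paper. -/
def pc {G : Type*} [Group G] (x y : G) : G := x⁻¹ * y⁻¹ * x * y

section

variable {G : Type*} [Group G] {a b c : G}

lemma inv_eq_self_of_sq_eq_one (ha : a ^ 2 = 1) : a⁻¹ = a :=
  inv_eq_of_mul_eq_one_right (by rwa [← sq])

lemma mul_mul_eq_of_sq_eq_one_of_commute (ha : a ^ 2 = 1) (hac : a * c = c * a) :
    a * c * a = c := by
  rw [hac, mul_assoc, ← sq, ha, mul_one]

lemma pc_sq_mul_eq_sq (ha : a ^ 2 = 1) (hb : b ^ 2 = 1) (hc : c ^ 2 = 1)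
    (hac : a * c = c * a) :
    pc ((a * b) ^ 2) c = (b * a * b * c) ^ 2 :=
  calc pc ((a * b) ^ 2) c = b * a * b * (a * c * a) * b * a * b * c := by
        simp only [pc, sq, mul_inv_rev, inv_eq_self_of_sq_eq_one ha,
          inv_eq_self_of_sq_eq_one hb, inv_eq_self_of_sq_eq_one hc]
        group
    _ = (b * a * b * c) ^ 2 := by
        rw [mul_mul_eq_of_sq_eq_one_of_commute ha hac, sq]
        simp only [mul_assoc]

lemma conj_pc_mul_sq_eq_sq (ha : a ^ 2 = 1) (hb : b ^ 2 = 1) (hc : c ^ 2 = 1)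
    (hac : a * c = c * a) :
    (c * b)⁻¹ * pc a ((b * c) ^ 2) * (c * b) = (b * a * b * c) ^ 2 := by
  have hcb : c * b = (b * c)⁻¹ := by
    rw [mul_inv_rev, inv_eq_self_of_sq_eq_one hb, inv_eq_self_of_sq_eq_one hc]
  calc (c * b)⁻¹ * pc a ((b * c) ^ 2) * (c * b)
        = b * c * a⁻¹ * c⁻¹ * b⁻¹ * c⁻¹ * b⁻¹ * a * b * c := by
        rw [hcb, pc, sq]
        group
    _ = b * (c * a * c) * b * c * b * a * b * c := by
        simp only [inv_eq_self_of_sq_eq_one ha, inv_eq_self_of_sq_eq_one hb,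
          inv_eq_self_of_sq_eq_one hc, mul_assoc]
    _ = (b * a * b * c) ^ 2 := by
        rw [mul_mul_eq_of_sq_eq_one_of_commute hc hac.symm, sq]
        simp only [mul_assoc]

end

/-- A commutator identity from the proof of Theorem 4.1:
`[(ρ0 ρ1)², ρ2] = [ρ0, (ρ1 ρ2)²] ^ (ρ2 ρ1)`. -/
theorem stmt_18 {G : Type*} [Group G] (ρ0 ρ1 ρ2 : G)
    (h0 : ρ0 ^ 2 = 1) (h1 : ρ1 ^ 2 = 1) (h2 : ρ2 ^ 2 = 1)
    (hc : ρ0 * ρ2 = ρ2 * ρ0) :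
    pc ((ρ0 * ρ1) ^ 2) ρ2 = (ρ2 * ρ1)⁻¹ * pc ρ0 ((ρ1 * ρ2) ^ 2) * (ρ2 * ρ1) := by
  rw [pc_sq_mul_eq_sq h0 h1 h2 hc, conj_pc_mul_sq_eq_sq h0 h1 h2 hc]
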